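/- The map orb_{F,r} is one-to-one: if (I_1, α_1) and (I_2, α_2) are pairs of a based fractional ideal of R_F and an element of K_F^× satisfying I_j² ⊆ α_j·I_F^{n-2} and N(I_j)² = r·N(α_j)·N(I_F^{n-2}) for j = 1, 2, and if the associated pairs of symmetric matrices lie in the same G_n(R)-orbit, then (I_1, α_1) and (I_2, α_2) are equivalent, i.e., there exists κ ∈ K_F^× such that α_1 = κ²·α_2 and the based ideals I_1 and κ·I_2 agree up to a G_n(R)-change of basis. -/

import Mathlib

open Polynomial Matrix MeasureTheory
open scoped Classical
noncomputable section
namespace BHS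



/-! ### Binary forms and the rings they cut out, over a general base -/

variable (R K : Type) [CommRing R] [Field K] [Algebra R K]

/-- The one-variable polynomial `F(x,1)` of the binary form of degree `n` with
coefficient vector `c` (so `F(x,z) = ∑ c i · x^(n-i) · z^i`), over `K`. -/
def binPoly (n : ℕ) (c : ℕ → R) : Polynomial K :=
  ∑ i ∈ Finset.range (n + 1), Polynomial.C (algebraMap R K (c i)) * Polynomial.X ^ (n - i)

/-- The étale algebra `K_F = K[x]/(F(x,1))`. -/
abbrev KF (n : ℕ) (c : ℕ → R) : Type := AdjoinRoot (binPoly R K n c)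

/-- θ, the image of x in K_F. -/
def θF (n : ℕ) (c : ℕ → R) : KF R K n c := AdjoinRoot.root _

/-- `ζ_i = ∑_{j<i} f_j θ^{i-j}`. -/
def ζF (n : ℕ) (c : ℕ → R) (i : ℕ) : KF R K n c :=
  ∑ j ∈ Finset.range i, algebraMap R (KF R K n c) (c j) * θF R K n c ^ (i - j)

/-- The ring `R_F`, as the free `R`-submodule of `K_F` with basis `1, ζ_1, …, ζ_{n-1}`
(a subring by Nakagawa's theorem). -/
def RFmod (n : ℕ) (c : ℕ → R) : Submodule R (KF R K n c) :=
  Submodule.span R ({1} ∪ {x | ∃ i, 1 ≤ i ∧ i ≤ n - 1 ∧ x = ζF R K n c i})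

/-- The fractional ideal `I_F^k`, as the free `R`-submodule of `K_F` with basis
`1, θ, …, θ^k, ζ_{k+1}, …, ζ_{n-1}`. -/
def IFmod (n : ℕ) (c : ℕ → R) (k : ℕ) : Submodule R (KF R K n c) :=
  Submodule.span R ({x | ∃ j ≤ k, x = θF R K n c ^ j} ∪
    {x | ∃ i, k + 1 ≤ i ∧ i ≤ n - 1 ∧ x = ζF R K n c i})

/-- `R_F` is the maximal order (the integral closure of `R`) in `K_F`. -/
def IsMaxOrder (n : ℕ) (c : ℕ → R) : Prop :=
  RFmod R K n c = Subalgebra.toSubmodule (integralClosure R (KF R K n c))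

/-- `M` is stable under multiplication by `R_F`, i.e. `M` is an `R_F`-submodule of `K_F`. -/
def IsStable (n : ℕ) (c : ℕ → R) (M : Submodule R (KF R K n c)) : Prop :=
  ∀ ρ ∈ RFmod R K n c, ∀ x ∈ M, ρ * x ∈ M

/-- `M` is an invertible fractional ideal of `R_F`. -/
def IsInvIdeal (n : ℕ) (c : ℕ → R) (M : Submodule R (KF R K n c)) : Prop :=
  IsStable R K n c M ∧
    ∃ N : Submodule R (KF R K n c), IsStable R K n c N ∧ M * N = RFmod R K n c

/-- The principal fractional ideal of `R_F` generated by `α`. -/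
def principal (n : ℕ) (c : ℕ → R) (α : KF R K n c) : Submodule R (KF R K n c) :=
  Submodule.span R {α} * RFmod R K n c

/-- `ρ` is a unit of the order `R_F`. -/
def IsUnitRF (n : ℕ) (c : ℕ → R) (ρ : KF R K n c) : Prop :=
  ρ ∈ RFmod R K n c ∧ ∃ σ ∈ RFmod R K n c, ρ * σ = 1

/-- `#R_F^×[2]`, the number of 2-torsion units of `R_F`. -/
def twoTorsUnitsCount (n : ℕ) (c : ℕ → R) : ℕ :=
  Nat.card {ρ : KF R K n c // ρ ∈ RFmod R K n c ∧ ρ ^ 2 = 1}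

/-- The number of 2-torsion elements of the ideal class group `Cl(R_F)`: the number of
invertible fractional ideals of `R_F` whose square is principal, counted modulo
principal fractional ideals. -/
def clTwoCount (n : ℕ) (c : ℕ → R) : ℕ :=
  Nat.card (Quot (fun (I J : {M : Submodule R (KF R K n c) //
      IsInvIdeal R K n c M ∧
        ∃ α : KF R K n c, IsUnit α ∧ M * M = principal R K n c α}) =>
    ∃ α : KF R K n c, IsUnit α ∧
      (I : Submodule R (KF R K n c)) =
        Submodule.span R {α} * (J : Submodule R (KF R K n c))))

/-- `α ∈ K_F` is totally positive: positive under every real embedding. -/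
def TotPos (n : ℕ) (c : ℕ → R) (α : KF R K n c) : Prop :=
  ∀ φ : KF R K n c →+* ℝ, 0 < φ α

/-- The number of 2-torsion elements of the narrow class group `Cl⁺(R_F)`. -/
def clTwoCountPlus (n : ℕ) (c : ℕ → R) : ℕ :=
  Nat.card (Quot (fun (I J : {M : Submodule R (KF R K n c) //
      IsInvIdeal R K n c M ∧
        ∃ α : KF R K n c, IsUnit α ∧ TotPos R K n c α ∧ M * M = principal R K n c α}) =>
    ∃ α : KF R K n c, IsUnit α ∧ TotPos R K n c α ∧
      (I : Submodule R (KF R K n c)) =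
        Submodule.span R {α} * (J : Submodule R (KF R K n c))))

/-- The order of the ideal class group of `R_F`. -/
def clCount (n : ℕ) (c : ℕ → R) : ℕ :=
  Nat.card (Quot (fun (I J : {M : Submodule R (KF R K n c) // IsInvIdeal R K n c M}) =>
    ∃ α : KF R K n c, IsUnit α ∧
      (I : Submodule R (KF R K n c)) =
        Submodule.span R {α} * (J : Submodule R (KF R K n c))))

/-- The order of the narrow class group of `R_F`. -/
def clCountPlus (n : ℕ) (c : ℕ → R) : ℕ :=
  Nat.card (Quot (fun (I J : {M : Submodule R (KF R K n c) // IsInvIdeal R K n c M}) =>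
    ∃ α : KF R K n c, IsUnit α ∧ TotPos R K n c α ∧
      (I : Submodule R (KF R K n c)) =
        Submodule.span R {α} * (J : Submodule R (KF R K n c))))


/-! ### Bases, norms, and the functionals π_{n-2}, π_{n-1} -/

/-- A `K`-basis of `K_F` (the power basis reindexed by `Fin n`). -/
def basisKF (n : ℕ) (c : ℕ → R) (hne : binPoly R K n c ≠ 0)
    (hdeg : (binPoly R K n c).natDegree = n) : Module.Basis (Fin n) K (KF R K n c) :=
  (AdjoinRoot.powerBasis hne).basis.reindex (finCongr hdeg)

/-- The vector `(1, ζ_1, …, ζ_{n-1})`, the standard basis of `R_F`. -/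
def eVec (n : ℕ) (c : ℕ → R) : Fin n → KF R K n c :=
  fun i => if (i : ℕ) = 0 then 1 else ζF R K n c i

/-- The vector `(1, θ, …, θ^k, ζ_{k+1}, …, ζ_{n-1})`, the standard basis of `I_F^k`. -/
def stdVec (n : ℕ) (c : ℕ → R) (k : ℕ) : Fin n → KF R K n c :=
  fun i => if (i : ℕ) ≤ k then θF R K n c ^ (i : ℕ) else ζF R K n c i

/-- The norm of a based fractional ideal with basis `b`: the determinant of the `K`-linear
map taking the standard basis `1, ζ_1, …, ζ_{n-1}` of `R_F` to `b`. -/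
def normBased (n : ℕ) (c : ℕ → R) (hne : binPoly R K n c ≠ 0)
    (hdeg : (binPoly R K n c).natDegree = n) (b : Fin n → KF R K n c) : K :=
  ((basisKF R K n c hne hdeg).toMatrix b).det /
    ((basisKF R K n c hne hdeg).toMatrix (eVec R K n c)).det

/-- Coordinates of `ρ ∈ K_F` in the basis `1, θ, …, θ^{n-2}, ζ_{n-1}` of `I_F^{n-2} ⊗ K = K_F`. -/
def coordStd (n : ℕ) (c : ℕ → R) (hne : binPoly R K n c ≠ 0)
    (hdeg : (binPoly R K n c).natDegree = n) (ρ : KF R K n c) : Fin n → K :=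
  Matrix.mulVec ((basisKF R K n c hne hdeg).toMatrix (stdVec R K n c (n - 2)))⁻¹
    (fun i => (basisKF R K n c hne hdeg).repr ρ i)

/-- The functional `π_{n-2}` (extended `K`-linearly to all of `K_F`): it kills
`1, θ, …, θ^{n-3}, ζ_{n-1}` and sends `θ^{n-2}` to `1`. -/
def piN2 (n : ℕ) (c : ℕ → R) (hn : 0 < n) (hne : binPoly R K n c ≠ 0)
    (hdeg : (binPoly R K n c).natDegree = n) (ρ : KF R K n c) : K :=
  coordStd R K n c hne hdeg ρ ⟨n - 2, by omega⟩

/-- The functional `π_{n-1}` (extended `K`-linearly to all of `K_F`): it kills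
`1, θ, …, θ^{n-2}` and sends `ζ_{n-1}` to `-1`. -/
def piN1 (n : ℕ) (c : ℕ → R) (hn : 0 < n) (hne : binPoly R K n c ≠ 0)
    (hdeg : (binPoly R K n c).natDegree = n) (ρ : KF R K n c) : K :=
  - coordStd R K n c hne hdeg ρ ⟨n - 1, by omega⟩


/-! ### The group G_n and pairs of symmetric matrices -/

/-- `G_n(S)`: `SL_n(S)` when `n` is odd, `SL_n^±(S)` when `n` is even. -/
def GnSet (S : Type) [CommRing S] (n : ℕ) : Set (Matrix (Fin n) (Fin n) S) :=
  {g | if Odd n then g.det = 1 else g.det = 1 ∨ g.det = -1}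

/-- `(A', B')` is in the `G_n(S)`-orbit of `(A, B)` under `g·(A,B) = (gAgᵀ, gBgᵀ)`. -/
def SameOrbit (S : Type) [CommRing S] (n : ℕ)
    (A B A' B' : Matrix (Fin n) (Fin n) S) : Prop :=
  ∃ g ∈ GnSet S n, A' = g * A * gᵀ ∧ B' = g * B * gᵀ

/-- The binary form `inv(x·A + z·B) = (-1)^⌊n/2⌋ det(x·A + z·B)`, as a polynomial
in the two variables `x = X 0`, `z = X 1`. -/
def invForm (S : Type) [CommRing S] (n : ℕ) (A B : Matrix (Fin n) (Fin n) S) :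
    MvPolynomial (Fin 2) S :=
  (-1) ^ (n / 2) *
    Matrix.det (Matrix.of fun i j =>
      MvPolynomial.X 0 * MvPolynomial.C (A i j) + MvPolynomial.X 1 * MvPolynomial.C (B i j))

/-- Coefficients of the monicized form `F_mon(x,z) = F(x, f_0·z)/f_0`. -/
def monC (S : Type) [CommRing S] (c : ℕ → S) (i : ℕ) : S :=
  if i = 0 then 1 else c i * c 0 ^ (i - 1)

/-- The binary form of degree `n` with coefficient vector `c`, as a polynomial in the
two variables `x = X 0`, `z = X 1`. -/
def mvForm (S : Type) [CommRing S] (n : ℕ) (c : ℕ → S) : MvPolynomial (Fin 2) S :=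
  ∑ i ∈ Finset.range (n + 1),
    MvPolynomial.C (c i) * MvPolynomial.X 0 ^ (n - i) * MvPolynomial.X 1 ^ i

/-- The identity `inv(x·A + z·B) = r · F_mon(x,z)` of binary forms of degree `n`. -/
def InvEq (S : Type) [CommRing S] (n : ℕ) (c : ℕ → S) (r : S)
    (A B : Matrix (Fin n) (Fin n) S) : Prop :=
  invForm S n A B = MvPolynomial.C r * mvForm S n (monC S c)


/-! ### Based fractional ideals and the orbit construction -/

/-- The data of a pair `(I, α)`: a based fractional ideal `I` of `R_F` with basis `b`,
and a unit `α ∈ K_F^×`, such that `I² ⊆ α·I_F^{n-2}` and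
`N(I)² = r·N(α)·N(I_F^{n-2})`. -/
structure BasedPair (n : ℕ) (c : ℕ → R) (r : R) (hne : binPoly R K n c ≠ 0)
    (hdeg : (binPoly R K n c).natDegree = n) : Type where
  b : Fin n → KF R K n c
  indep : LinearIndependent R b
  stable : IsStable R K n c (Submodule.span R (Set.range b))
  α : KF R K n c
  unitα : IsUnit α
  sq_sub : ∀ x ∈ Submodule.span R (Set.range b), ∀ y ∈ Submodule.span R (Set.range b),
      Ring.inverse α * (x * y) ∈ IFmod R K n c (n - 2)
  norm_eq : normBased R K n c hne hdeg b ^ 2 =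
      algebraMap R K r * Algebra.norm K α * normBased R K n c hne hdeg (stdVec R K n c (n - 2))

/-- The span of the basis of a based pair, i.e. the underlying fractional ideal. -/
def BasedPair.ideal {n : ℕ} {c : ℕ → R} {r : R} {hne : binPoly R K n c ≠ 0}
    {hdeg : (binPoly R K n c).natDegree = n} (P : BasedPair R K n c r hne hdeg) :
    Submodule R (KF R K n c) :=
  Submodule.span R (Set.range P.b)

/-- The underlying fractional ideal of the pair is invertible. -/
def BasedPair.IsInv {n : ℕ} {c : ℕ → R} {r : R} {hne : binPoly R K n c ≠ 0}
    {hdeg : (binPoly R K n c).natDegree = n} (P : BasedPair R K n c r hne hdeg) : Prop :=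
  IsInvIdeal R K n c (BasedPair.ideal R K P)

/-- The pair of symmetric matrices `(A, B)` represents the based pair `(I, α)`: `A` and `B`
are the matrices over `R` of the bilinear forms `π_{n-1}(α⁻¹βγ)` and `π_{n-2}(α⁻¹βγ)` on
`I × I` in the chosen basis. -/
def Represents (n : ℕ) (c : ℕ → R) (r : R) (hn : 0 < n) (hne : binPoly R K n c ≠ 0)
    (hdeg : (binPoly R K n c).natDegree = n) (P : BasedPair R K n c r hne hdeg)
    (A B : Matrix (Fin n) (Fin n) R) : Prop :=
  (∀ i j, algebraMap R K (A i j) =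
      piN1 R K n c hn hne hdeg (Ring.inverse P.α * (P.b i * P.b j))) ∧
  (∀ i j, algebraMap R K (B i j) =
      piN2 R K n c hn hne hdeg (Ring.inverse P.α * (P.b i * P.b j)))

/-- Equivalence of pairs `(I₁, α₁) ∼ (I₂, α₂)`: there is `κ ∈ K_F^×` with `α₁ = κ²·α₂`
and the based ideals `I₁` and `κ·I₂` equal up to a `G_n(R)`-change of basis. -/
def PairEquiv (n : ℕ) (c : ℕ → R) (r : R) (hne : binPoly R K n c ≠ 0)
    (hdeg : (binPoly R K n c).natDegree = n)
    (P Q : BasedPair R K n c r hne hdeg) : Prop :=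
  ∃ κ : KF R K n c, IsUnit κ ∧ P.α = κ ^ 2 * Q.α ∧
    ∃ g ∈ GnSet R n, ∀ i, P.b i = ∑ j, algebraMap R (KF R K n c) (g i j) * (κ * Q.b j)

/-- The `G_n(R)`-orbit of `(A, B)` lies in the image of the map `orb_{F,r}`. -/
def InOrbImage (n : ℕ) (c : ℕ → R) (r : R) (hn : 0 < n) (hne : binPoly R K n c ≠ 0)
    (hdeg : (binPoly R K n c).natDegree = n) (A B : Matrix (Fin n) (Fin n) R) : Prop :=
  ∃ P : BasedPair R K n c r hne hdeg, ∃ A' B',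
    Represents R K n c r hn hne hdeg P A' B' ∧ SameOrbit R n A' B' A B

/-- The `G_n(R)`-orbit of `(A, B)` lies in the image of `H*_{F,r}` (pairs with invertible
underlying ideal) under the map `orb_{F,r}`. -/
def InOrbImageStar (n : ℕ) (c : ℕ → R) (r : R) (hn : 0 < n) (hne : binPoly R K n c ≠ 0)
    (hdeg : (binPoly R K n c).natDegree = n) (A B : Matrix (Fin n) (Fin n) R) : Prop :=
  ∃ P : BasedPair R K n c r hne hdeg, BasedPair.IsInv R K P ∧ ∃ A' B',
    Represents R K n c r hn hne hdeg P A' B' ∧ SameOrbit R n A' B' A B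

/-- `φ` is an `R_F`-module endomorphism of the `R_F`-stable submodule `M`. -/
def IsRFEndo (n : ℕ) (c : ℕ → R) (M : Submodule R (KF R K n c))
    (hM : IsStable R K n c M) (φ : Module.End R ↥M) : Prop :=
  ∀ ρ (hρ : ρ ∈ RFmod R K n c) (x : ↥M),
    (↑(φ ⟨ρ * ↑x, hM ρ hρ ↑x x.2⟩) : KF R K n c) = ρ * ↑(φ x)

end BHS

/-!
Write `ℓ` for the coefficient of `θ^{n-1}` in the power basis of `K_F`. Extended `K`-linearly,
`π_{n-1} = -f₀⁻¹ ℓ` and `π_{n-2}(ρ) = ℓ(θρ)`, and the pairing `(u, v) ↦ ℓ(uv)` on `K_F` is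
nondegenerate. If `g` carries the matrices of `(I₁, α₁)` to those of `(I₂, α₂)`, the `K`-linear
map `φ` sending the basis of `I₂` to the `g`-transform of the basis of `I₁` satisfies
`ℓ(α₁⁻¹ φx φy) = ℓ(α₂⁻¹ xy)` and `ℓ(θ α₁⁻¹ φx φy) = ℓ(θ α₂⁻¹ xy)`. Comparing the two identities
shows that `φ` commutes with multiplication by `θ`, hence is multiplication by `κ = φ 1`, and
nondegeneracy then gives `α₁⁻¹ κ² = α₂⁻¹`.
-/

section PowerBasis

variable {K S : Type*} [CommSemiring K] [Semiring S] [Algebra K S]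

theorem LinearMap.map_mul_of_map_gen_mul {θ : S} (hθ : Algebra.adjoin K {θ} = ⊤)
    (φ : S →ₗ[K] S) (hφ : ∀ x, φ (θ * x) = θ * φ x) (s x : S) : φ (s * x) = s * φ x := by
  have hs : s ∈ Algebra.adjoin K {θ} := hθ ▸ Algebra.mem_top
  induction hs using Algebra.adjoin_induction generalizing x with
  | mem y hy => rw [Set.mem_singleton_iff.mp hy, hφ]
  | algebraMap a => rw [← Algebra.smul_def, ← Algebra.smul_def, map_smul]
  | add y z _ _ hy hz => rw [add_mul, add_mul, map_add, hy, hz]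
  | mul y z _ _ hy hz => rw [mul_assoc, hy, hz, mul_assoc]

theorem Module.Basis.repr_aeval_of_natDegree_lt {n : ℕ} (b : Module.Basis (Fin n) K S) {θ : S}
    (hb : ∀ i, b i = θ ^ (i : ℕ)) {p : K[X]} (hp : p.natDegree < n) (i : Fin n) :
    b.repr (aeval θ p) i = p.coeff i := by
  have hsum : aeval θ p = ∑ j : Fin n, p.coeff j • b j := by
    rw [aeval_eq_sum_range' hp, ← Fin.sum_univ_eq_sum_range (fun j => p.coeff j • θ ^ j)]
    simp only [hb]
  rw [hsum, b.repr_sum_self]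

/-- If `u = p(θ) ≠ 0` with `deg p = m`, the top coordinate of `u θ^(n-1-m)` is the leading
coefficient of `p`. -/
theorem Module.Basis.eq_zero_of_forall_repr_mul_eq_zero {n : ℕ} (b : Module.Basis (Fin n) K S)
    {θ : S} (hb : ∀ i, b i = θ ^ (i : ℕ)) (top : Fin n) (htop : (top : ℕ) + 1 = n) {u : S}
    (hu : ∀ v, b.repr (u * v) top = 0) : u = 0 := by
  set p : K[X] := ∑ i : Fin n, C (b.repr u i) * X ^ (i : ℕ)
  have hpu : aeval θ p = u := by
    conv_rhs => rw [← b.sum_repr u]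
    simp only [p, map_sum, map_mul, aeval_C, map_pow, aeval_X, ← Algebra.smul_def, hb]
  by_contra hu0
  have hp0 : p ≠ 0 := by rintro hp; rw [hp, map_zero] at hpu; exact hu0 hpu.symm
  have hpdeg : p.natDegree < n := (natDegree_lt_iff_degree_lt hp0).2 (degree_sum_fin_lt _)
  set k := n - 1 - p.natDegree
  have hshift : u * θ ^ k = aeval θ (p * X ^ k) := by simp [← hpu]
  have hlead := hu (θ ^ k)
  have hdeg : (p * X ^ k).natDegree < n := by
    grw [natDegree_mul_le, natDegree_X_pow_le]; omega
  rw [hshift, b.repr_aeval_of_natDegree_lt hb hdeg,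
    show (top : ℕ) = p.natDegree + k by omega, coeff_mul_X_pow, coeff_natDegree,
    leadingCoeff_eq_zero] at hlead
  exact hp0 hlead

end PowerBasis

theorem Matrix.sum_smul_sum_smul {ι K V : Type*} [Fintype ι] [CommSemiring K] [AddCommMonoid V]
    [Module K V] (M N : Matrix ι ι K) (v : ι → V) (i : ι) :
    ∑ j, M i j • ∑ k, N j k • v k = ∑ k, (M * N) i k • v k := by
  simp only [Finset.smul_sum, smul_smul, Matrix.mul_apply, Finset.sum_smul]
  exact Finset.sum_comm

theorem Matrix.sum_smul_sum_smul_of_mul_eq_one {ι K V : Type*} [Fintype ι] [DecidableEq ι]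
    [CommSemiring K] [AddCommMonoid V] [Module K V] {M N : Matrix ι ι K} (h : M * N = 1)
    (v : ι → V) (i : ι) : ∑ j, M i j • ∑ k, N j k • v k = v i := by
  simp [Matrix.sum_smul_sum_smul, h, Matrix.one_apply]

section Pairing

variable {K S : Type*} [Field K] [CommRing S] [Algebra K S]

def pairingMatrix {ι : Type*} (ℓ : S →ₗ[K] K) (a : S) (v : ι → S) : Matrix ι ι K :=
  Matrix.of fun i j => ℓ (a * (v i * v j))

theorem pairingMatrix_sum_smul {ι : Type*} [Fintype ι] (ℓ : S →ₗ[K] K) (a : S) (v : ι → S)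
    (g : Matrix ι ι K) :
    pairingMatrix ℓ a (fun i => ∑ j, g i j • v j) = g * pairingMatrix ℓ a v * gᵀ := by
  ext i j
  simp only [pairingMatrix, Matrix.of_apply, Matrix.mul_apply, Matrix.transpose_apply]
  rw [Finset.sum_mul_sum, Finset.sum_comm]
  simp only [Finset.mul_sum, Finset.sum_mul, map_sum, smul_mul_assoc, mul_smul_comm,
    map_smul, smul_eq_mul]
  exact Finset.sum_congr rfl fun k _ => Finset.sum_congr rfl fun l _ => by ring

theorem map_pairing_eq_of_pairingMatrix_eq {ι : Type*} (b : Module.Basis ι K S)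
    (ℓ : S →ₗ[K] K) {a a' : S} (φ : S →ₗ[K] S)
    (h : pairingMatrix ℓ a (φ ∘ b) = pairingMatrix ℓ a' b) (x y : S) :
    ℓ (a * (φ x * φ y)) = ℓ (a' * (x * y)) := by
  have hforms : ((LinearMap.mul K S).compl₁₂ φ φ).compr₂ (ℓ ∘ₗ LinearMap.mulLeft K a) =
      (LinearMap.mul K S).compr₂ (ℓ ∘ₗ LinearMap.mulLeft K a') :=
    LinearMap.ext_basis b b fun i j => congr_fun₂ h i j
  exact LinearMap.congr_fun₂ hforms x y

theorem map_pairing_eq_of_pairingMatrix_eq_mul_mul_transpose {ι : Type*} [Fintype ι]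
    (b : Module.Basis ι K S) (v : ι → S) (g : Matrix ι ι K) (ℓ : S →ₗ[K] K) {a a' : S}
    (h : pairingMatrix ℓ a' b = g * pairingMatrix ℓ a v * gᵀ) (x y : S) :
    let φ := b.constr K fun i => ∑ j, g i j • v j
    ℓ (a * (φ x * φ y)) = ℓ (a' * (x * y)) := by
  refine map_pairing_eq_of_pairingMatrix_eq b ℓ _ ?_ x y
  rw [h, ← pairingMatrix_sum_smul]
  exact congrArg _ (funext (b.constr_basis K _))

variable [FiniteDimensional K S]

theorem exists_eq_mul_of_preserves_pairings (ℓ : S →ₗ[K] K)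
    (hℓ : ∀ u, (∀ v, ℓ (u * v) = 0) → u = 0) {θ : S} (hθ : Algebra.adjoin K {θ} = ⊤)
    {a a' : S} (ha : IsUnit a) (ha' : IsUnit a') (φ : S →ₗ[K] S)
    (h₀ : ∀ x y, ℓ (a * (φ x * φ y)) = ℓ (a' * (x * y)))
    (h₁ : ∀ x y, ℓ (θ * (a * (φ x * φ y))) = ℓ (θ * (a' * (x * y)))) :
    ∃ κ, IsUnit κ ∧ (∀ x, φ x = κ * x) ∧ a * κ ^ 2 = a' := by
  have hinj : Function.Injective φ := by
    refine (injective_iff_map_eq_zero φ).2 fun x hx => ha'.mul_right_eq_zero.1 <| hℓ _ fun y => ?_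
    rw [mul_assoc, ← h₀, hx, zero_mul, mul_zero, map_zero]
  have hsurj := LinearMap.injective_iff_surjective.1 hinj
  have hcomm : ∀ x, φ (θ * x) = θ * φ x := by
    intro x
    refine (sub_eq_zero.1 (ha.mul_right_eq_zero.1 (hℓ _ fun v => ?_))).symm
    obtain ⟨y, rfl⟩ := hsurj v
    calc ℓ (a * (θ * φ x - φ (θ * x)) * φ y)
        = ℓ (θ * (a * (φ x * φ y))) - ℓ (a * (φ (θ * x) * φ y)) := by rw [← map_sub]; ring_nf
      _ = 0 := by rw [h₁, h₀, ← map_sub]; ring_nf; exact map_zero ℓ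
  have hmul : ∀ x, φ x = φ 1 * x := fun x => by
    rw [mul_comm, ← φ.map_mul_of_map_gen_mul hθ hcomm, mul_one]
  have hsq : a * φ 1 ^ 2 = a' := by
    refine sub_eq_zero.1 (hℓ _ fun v => ?_)
    have h := h₀ 1 v
    rw [hmul 1, hmul v, one_mul] at h
    rw [sub_mul, map_sub, sub_eq_zero, ← h]
    ring_nf
  exact ⟨φ 1, (isUnit_pow_iff two_ne_zero).1 (isUnit_of_mul_isUnit_right (hsq ▸ ha')), hmul, hsq⟩

end Pairing

namespace BHS

theorem det_eq_one_or_neg_one_of_mem_GnSet {S : Type} [CommRing S] {n : ℕ}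
    {g : Matrix (Fin n) (Fin n) S} (hg : g ∈ GnSet S n) : g.det = 1 ∨ g.det = -1 := by
  rw [GnSet, Set.mem_ofPred_eq] at hg
  split_ifs at hg
  exacts [Or.inl hg, hg]

theorem isUnit_det_of_mem_GnSet {S : Type} [CommRing S] {n : ℕ}
    {g : Matrix (Fin n) (Fin n) S} (hg : g ∈ GnSet S n) : IsUnit g.det := by
  rcases det_eq_one_or_neg_one_of_mem_GnSet hg with h | h <;> rw [h]
  exacts [isUnit_one, isUnit_one.neg]

theorem inv_mem_GnSet {S : Type} [CommRing S] {n : ℕ}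
    {g : Matrix (Fin n) (Fin n) S} (hg : g ∈ GnSet S n) : g⁻¹ ∈ GnSet S n := by
  have hinv := Matrix.det_nonsing_inv_mul_det g (isUnit_det_of_mem_GnSet hg)
  rw [GnSet, Set.mem_ofPred_eq] at hg ⊢
  split_ifs at hg ⊢
  · linear_combination hinv - g⁻¹.det * hg
  · rcases hg with h | h
    · exact Or.inl (by linear_combination hinv - g⁻¹.det * h)
    · exact Or.inr (by linear_combination -hinv + g⁻¹.det * h)

variable {R K : Type} [CommRing R] [Field K] [Algebra R K] {n : ℕ} {c : ℕ → R}

theorem finrank_KF (hne : binPoly R K n c ≠ 0) (hdeg : (binPoly R K n c).natDegree = n) :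
    Module.finrank K (KF R K n c) = n := by
  rw [Module.finrank_eq_card_basis (basisKF R K n c hne hdeg), Fintype.card_fin]

theorem finiteDimensional_KF (hne : binPoly R K n c ≠ 0)
    (hdeg : (binPoly R K n c).natDegree = n) : FiniteDimensional K (KF R K n c) :=
  .of_basis (basisKF R K n c hne hdeg)

section PowerBasisKF

variable (hne : binPoly R K n c ≠ 0) (hdeg : (binPoly R K n c).natDegree = n)

theorem basisKF_apply (i : Fin n) : basisKF R K n c hne hdeg i = θF R K n c ^ (i : ℕ) := by
  simp only [basisKF, Module.Basis.coe_reindex, PowerBasis.coe_basis, AdjoinRoot.powerBasis_gen,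
    Function.comp_apply, θF]
  rfl

theorem adjoin_θF_eq_top : Algebra.adjoin K {θF R K n c} = ⊤ := AdjoinRoot.adjoinRoot_eq_top

def topCoeff (hn : 0 < n) : KF R K n c →ₗ[K] K :=
  (basisKF R K n c hne hdeg).coord ⟨n - 1, by omega⟩

theorem topCoeff_θF_pow (hn : 0 < n) {i : ℕ} (hi : i < n) :
    topCoeff hne hdeg hn (θF R K n c ^ i) = if i = n - 1 then 1 else 0 := by
  rw [topCoeff, Module.Basis.coord_apply, ← basisKF_apply hne hdeg ⟨i, hi⟩,
    Module.Basis.repr_self, Finsupp.single_apply]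
  simp [Fin.ext_iff]

theorem topCoeff_nondegenerate (hn : 0 < n) (u : KF R K n c)
    (hu : ∀ v, topCoeff hne hdeg hn (u * v) = 0) : u = 0 :=
  (basisKF R K n c hne hdeg).eq_zero_of_forall_repr_mul_eq_zero (basisKF_apply hne hdeg)
    ⟨n - 1, by omega⟩ (by simp only; omega) hu

end PowerBasisKF

theorem ζF_pred_eq (hn : 2 ≤ n) :
    ζF R K n c (n - 1) = algebraMap R K (c 0) • θF R K n c ^ (n - 1) +
      ∑ j ∈ Finset.range (n - 2), algebraMap R K (c (j + 1)) • θF R K n c ^ (n - 2 - j) := by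
  rw [ζF, show n - 1 = n - 2 + 1 by omega, Finset.sum_range_succ', add_comm]
  simp only [Algebra.smul_def, ← IsScalarTower.algebraMap_apply, Nat.sub_zero,
    Nat.add_sub_add_right]

theorem θF_mul_ζF_pred (hn : 1 ≤ n) :
    θF R K n c * ζF R K n c (n - 1) =
      -(algebraMap R K (c (n - 1)) • θF R K n c + algebraMap R K (c n) • 1) := by
  obtain ⟨m, rfl⟩ : ∃ m, n = m + 1 := ⟨n - 1, by omega⟩
  have hroot : aeval (θF R K (m + 1) c) (binPoly R K (m + 1) c) = 0 := by
    rw [θF, AdjoinRoot.aeval_eq, AdjoinRoot.mk_self]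
  simp only [binPoly, map_sum] at hroot
  simp only [map_mul, aeval_C, map_pow, aeval_X, ← Algebra.smul_def,
    Finset.sum_range_succ _ (m + 1), Finset.sum_range_succ _ m, Nat.sub_self,
    Nat.add_sub_cancel_left, pow_one, pow_zero] at hroot
  have hmul : θF R K (m + 1) c * ζF R K (m + 1) c m =
      ∑ j ∈ Finset.range m, algebraMap R K (c j) • θF R K (m + 1) c ^ (m + 1 - j) := by
    rw [ζF, Finset.mul_sum]
    refine Finset.sum_congr rfl fun j hj => ?_
    rw [Algebra.smul_def, ← IsScalarTower.algebraMap_apply, mul_left_comm, ← pow_succ',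
      Nat.sub_add_comm (Finset.mem_range.1 hj).le]
  rw [Nat.add_sub_cancel, hmul]
  linear_combination hroot

theorem top_le_span_stdVec (hne : binPoly R K n c ≠ 0)
    (hdeg : (binPoly R K n c).natDegree = n) (hn : 2 ≤ n) (hc0 : algebraMap R K (c 0) ≠ 0) :
    ⊤ ≤ Submodule.span K (Set.range (stdVec R K n c (n - 2))) := by
  set V := Submodule.span K (Set.range (stdVec R K n c (n - 2)))
  have hlow : ∀ i ≤ n - 2, θF R K n c ^ i ∈ V := fun i hi =>
    Submodule.subset_span ⟨⟨i, by omega⟩, if_pos hi⟩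
  have hζ : ζF R K n c (n - 1) ∈ V :=
    Submodule.subset_span ⟨⟨n - 1, by omega⟩, if_neg (by simp only; omega)⟩
  have htop : θF R K n c ^ (n - 1) ∈ V := by
    have heq : θF R K n c ^ (n - 1) = (algebraMap R K (c 0))⁻¹ • (ζF R K n c (n - 1) -
        ∑ j ∈ Finset.range (n - 2), algebraMap R K (c (j + 1)) • θF R K n c ^ (n - 2 - j)) := by
      rw [ζF_pred_eq hn, add_sub_cancel_right, inv_smul_smul₀ hc0]
    rw [heq]
    exact V.smul_mem _ (V.sub_mem hζ (V.sum_mem fun j _ => V.smul_mem _ (hlow _ (by omega))))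
  rw [← (basisKF R K n c hne hdeg).span_eq, Submodule.span_le]
  rintro _ ⟨i, rfl⟩
  rw [basisKF_apply]
  rcases (show (i : ℕ) ≤ n - 2 ∨ (i : ℕ) = n - 1 by omega) with hi | hi
  · exact hlow i hi
  · rw [hi]; exact htop

section Functionals

variable (hne : binPoly R K n c ≠ 0) (hdeg : (binPoly R K n c).natDegree = n)

theorem topCoeff_ζF_pred (hn : 2 ≤ n) :
    topCoeff hne hdeg (by omega) (ζF R K n c (n - 1)) = algebraMap R K (c 0) := by
  rw [ζF_pred_eq hn, map_add, map_sum, map_smul, topCoeff_θF_pow _ _ _ (by omega), if_pos rfl,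
    smul_eq_mul, mul_one, add_eq_left]
  refine Finset.sum_eq_zero fun j _ => ?_
  rw [map_smul, topCoeff_θF_pow _ _ _ (by omega), if_neg (by omega), smul_zero]

theorem topCoeff_θF_mul_ζF_pred (hn : 3 ≤ n) :
    topCoeff hne hdeg (by omega) (θF R K n c * ζF R K n c (n - 1)) = 0 := by
  rw [θF_mul_ζF_pred (by omega), map_neg, map_add, map_smul, map_smul,
    ← pow_one (θF R K n c), ← pow_zero (θF R K n c), topCoeff_θF_pow _ _ _ (by omega),
    topCoeff_θF_pow _ _ _ (by omega), if_neg (by omega), if_neg (by omega)]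
  simp

def stdBasis (hn : 2 ≤ n) (hc0 : algebraMap R K (c 0) ≠ 0) :
    Module.Basis (Fin n) K (KF R K n c) :=
  basisOfTopLeSpanOfCardEqFinrank _ (top_le_span_stdVec hne hdeg hn hc0)
    (by rw [Fintype.card_fin, finrank_KF hne hdeg])

theorem coe_stdBasis (hn : 2 ≤ n) (hc0 : algebraMap R K (c 0) ≠ 0) :
    ⇑(stdBasis hne hdeg hn hc0) = stdVec R K n c (n - 2) :=
  coe_basisOfTopLeSpanOfCardEqFinrank _ _ _

theorem coordStd_eq_repr (hn : 2 ≤ n) (hc0 : algebraMap R K (c 0) ≠ 0) (ρ : KF R K n c) :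
    coordStd R K n c hne hdeg ρ = ⇑((stdBasis hne hdeg hn hc0).repr ρ) := by
  rw [coordStd, ← coe_stdBasis hne hdeg hn hc0, Matrix.inv_eq_left_inv
    (Module.Basis.toMatrix_mul_toMatrix_flip _ _)]
  exact Module.Basis.toMatrix_mulVec_repr _ _ ρ

theorem piN1_eq (hn : 3 ≤ n) (hc0 : algebraMap R K (c 0) ≠ 0) (ρ : KF R K n c) :
    piN1 R K n c (by omega) hne hdeg ρ =
      -((algebraMap R K (c 0))⁻¹ * topCoeff hne hdeg (by omega) ρ) := by
  have hcoord : (stdBasis hne hdeg (by omega) hc0).coord ⟨n - 1, by omega⟩ =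
      (algebraMap R K (c 0))⁻¹ • topCoeff hne hdeg (by omega) := by
    refine (stdBasis hne hdeg (by omega) hc0).ext fun j => ?_
    rw [Module.Basis.coord_apply, Module.Basis.repr_self, LinearMap.smul_apply, coe_stdBasis,
      stdVec, Finsupp.single_apply, smul_eq_mul]
    simp only [Fin.ext_iff]
    split_ifs with hj hj'
    · omega
    · rw [hj, topCoeff_ζF_pred _ _ (by omega), inv_mul_cancel₀ hc0]
    · rw [topCoeff_θF_pow _ _ _ (by omega), if_neg hj, mul_zero]
    · omega
  rw [piN1, coordStd_eq_repr hne hdeg (by omega) hc0, ← Module.Basis.coord_apply, hcoord]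
  rfl

theorem piN2_eq (hn : 3 ≤ n) (hc0 : algebraMap R K (c 0) ≠ 0) (ρ : KF R K n c) :
    piN2 R K n c (by omega) hne hdeg ρ = topCoeff hne hdeg (by omega) (θF R K n c * ρ) := by
  have hcoord : (stdBasis hne hdeg (by omega) hc0).coord ⟨n - 2, by omega⟩ =
      topCoeff hne hdeg (by omega) ∘ₗ LinearMap.mulLeft K (θF R K n c) := by
    refine (stdBasis hne hdeg (by omega) hc0).ext fun j => ?_
    rw [Module.Basis.coord_apply, Module.Basis.repr_self, LinearMap.comp_apply,
      LinearMap.mulLeft_apply, coe_stdBasis, stdVec, Finsupp.single_apply]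
    simp only [Fin.ext_iff]
    split_ifs with hj hj'
    · rw [← pow_succ', topCoeff_θF_pow _ _ _ (by omega), if_pos (by omega)]
    · omega
    · rw [← pow_succ', topCoeff_θF_pow _ _ _ (by omega), if_neg (by omega)]
    · rw [show (j : ℕ) = n - 1 by omega, topCoeff_θF_mul_ζF_pred _ _ hn]
  rw [piN2, coordStd_eq_repr hne hdeg (by omega) hc0, ← Module.Basis.coord_apply, hcoord]
  rfl

end Functionals

section Pairs

variable {r : R} {hne : binPoly R K n c ≠ 0} {hdeg : (binPoly R K n c).natDegree = n}

def BasedPair.basis [IsFractionRing R K] (P : BasedPair R K n c r hne hdeg) :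
    Module.Basis (Fin n) K (KF R K n c) :=
  haveI := finiteDimensional_KF hne hdeg
  have hli := LinearIndependent.localization K (nonZeroDivisors R) P.indep
  .mk hli (hli.span_eq_top_of_card_eq_finrank' (by rw [Fintype.card_fin, finrank_KF hne hdeg])).ge

theorem BasedPair.coe_basis [IsFractionRing R K] (P : BasedPair R K n c r hne hdeg) :
    ⇑P.basis = P.b := by
  simp only [BasedPair.basis, Module.Basis.coe_mk]

theorem Represents.pairingMatrix_topCoeff (hn : 3 ≤ n) (hc0 : algebraMap R K (c 0) ≠ 0)
    {hp : 0 < n} {P : BasedPair R K n c r hne hdeg} {A B : Matrix (Fin n) (Fin n) R}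
    (hP : Represents R K n c r hp hne hdeg P A B) :
    pairingMatrix (topCoeff hne hdeg hp) (Ring.inverse P.α) P.b =
      -algebraMap R K (c 0) • A.map (algebraMap R K) := by
  ext i j
  rw [pairingMatrix, Matrix.of_apply, Matrix.smul_apply, Matrix.map_apply, hP.1 i j,
    piN1_eq hne hdeg hn hc0, smul_eq_mul]
  field_simp

theorem Represents.pairingMatrix_topCoeff_θF (hn : 3 ≤ n) (hc0 : algebraMap R K (c 0) ≠ 0)
    {hp : 0 < n} {P : BasedPair R K n c r hne hdeg} {A B : Matrix (Fin n) (Fin n) R}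
    (hP : Represents R K n c r hp hne hdeg P A B) :
    pairingMatrix (topCoeff hne hdeg hp ∘ₗ LinearMap.mulLeft K (θF R K n c))
      (Ring.inverse P.α) P.b = B.map (algebraMap R K) := by
  ext i j
  rw [pairingMatrix, Matrix.of_apply, Matrix.map_apply, hP.2 i j, piN2_eq hne hdeg hn hc0]
  rfl

end Pairs

/-- Proposition 2.4: the map `orb_{F,r}` is one-to-one: if two pairs
`(I₁, α₁)` and `(I₂, α₂)` give rise to the same `G_n(R)`-orbit, they are equivalent. -/
theorem orb_map_injective
    (R K : Type) [CommRing R] [Field K]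
    [Algebra R K] [IsFractionRing R K]
    (n : ℕ) (hn : 3 ≤ n) (c : ℕ → R) (hf0 : c 0 ≠ 0)
    (hne : binPoly R K n c ≠ 0) (hdeg : (binPoly R K n c).natDegree = n)
    (r : Rˣ)
    (P Q : BasedPair R K n c (r : R) hne hdeg)
    (A B A' B' : Matrix (Fin n) (Fin n) R)
    (hP : Represents R K n c (r : R) (by omega) hne hdeg P A B)
    (hQ : Represents R K n c (r : R) (by omega) hne hdeg Q A' B')
    (horb : SameOrbit R n A B A' B') :
    PairEquiv R K n c (r : R) hne hdeg P Q := by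
  have hc0 : algebraMap R K (c 0) ≠ 0 := (map_ne_zero_iff _ (IsFractionRing.injective R K)).2 hf0
  have := finiteDimensional_KF hne hdeg
  obtain ⟨g, hg, rfl, rfl⟩ := horb
  set g' := g.map (algebraMap R K)
  set φ := Q.basis.constr K fun i => ∑ j, g' i j • P.b j
  obtain ⟨κ, hκ, hφκ, hsq⟩ := exists_eq_mul_of_preserves_pairings _
    (topCoeff_nondegenerate hne hdeg (by omega)) adjoin_θF_eq_top P.unitα.ringInverse
    Q.unitα.ringInverse φ
    (map_pairing_eq_of_pairingMatrix_eq_mul_mul_transpose Q.basis P.b g' _ (by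
      rw [Q.coe_basis, hQ.pairingMatrix_topCoeff hn hc0, hP.pairingMatrix_topCoeff hn hc0,
        Matrix.map_mul, Matrix.map_mul, Matrix.transpose_map, Matrix.mul_smul, Matrix.smul_mul]))
    (map_pairing_eq_of_pairingMatrix_eq_mul_mul_transpose Q.basis P.b g' _ (by
      rw [Q.coe_basis, hQ.pairingMatrix_topCoeff_θF hn hc0, hP.pairingMatrix_topCoeff_θF hn hc0,
        Matrix.map_mul, Matrix.map_mul, Matrix.transpose_map]))
  refine ⟨κ, hκ, ?_, g⁻¹, inv_mem_GnSet hg, fun i => ?_⟩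
  · linear_combination -(P.α * Q.α) * hsq + κ ^ 2 * Q.α * Ring.mul_inverse_cancel _ P.unitα -
      P.α * Ring.inverse_mul_cancel _ Q.unitα
  · have hκQ : ∀ j, κ * Q.b j = ∑ k, g' j k • P.b k := fun j => by
      rw [← hφκ, ← Q.coe_basis, Q.basis.constr_basis]
    have hgg : (g⁻¹).map (algebraMap R K) * g' = 1 := by
      rw [← Matrix.map_mul, Matrix.nonsing_inv_mul _ (isUnit_det_of_mem_GnSet hg),
        Matrix.map_one _ (map_zero _) (map_one _)]
    simp only [hκQ, ← Matrix.sum_smul_sum_smul_of_mul_eq_one hgg P.b i, Matrix.map_apply,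
      Algebra.smul_def, ← IsScalarTower.algebraMap_apply]

end BHS
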